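/- Let G = (ℝ^d, ·) be a group with polynomial multiplication and inversion and identity 0, and let (δ_t)_{t>0} with δ_t(u) = (t^{1/β₁}u₁,…,t^{1/β_d}u_d), where β₁,…,β_d ∈ (0,2), be an approximate group dilation structure for G with limit law ∙ and limit inverse x∙⁻¹. Let β ≥ max_i β_i, set β₋ = min_i β_i and β₊ = max_i β_i, and let ‖·‖ : ℝ^d → [0,∞) be a continuous function satisfying ‖δ_t(u)‖ = t^{1/β}‖u‖ for all t > 0 and u, and c·max_{1≤i≤d}|u_i|^{β_i/β} ≤ ‖u‖ ≤ C·max_{1≤i≤d}|u_i|^{β_i/β} for some constants 0 < c ≤ C and all u ∈ ℝ^d. Then for every compact set K ⊆ ℝ^d there is a constant C_K such that for all x, y ∈ K and all t ≥ 1: ‖δ_{1/t}(δ_t(x)⁻¹ · δ_t(y))‖ ≤ C_K ‖y − x‖^{β₋/β₊} and ‖δ_{1/t}(δ_t(x)⁻¹ · δ_t(y))‖ ≤ C_K ‖x∙⁻¹ ∙ y‖^{β₋/β₊}. -/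

import Mathlib

open Filter Topology MeasureTheory

noncomputable section

/-- Straight dilation with exponents `a`: `(dil a t u) i = t ^ (a i) * u i`. -/
def dil {d : ℕ} (a : Fin d → ℝ) (t : ℝ) (u : Fin d → ℝ) : Fin d → ℝ :=
  fun i => t ^ a i * u i

/-- A group structure on `ℝ^d` with identity `0` whose multiplication and inversion are
given coordinatewise by real polynomial functions of the coordinates. -/
structure PolyGroup (d : ℕ) where
  mul : (Fin d → ℝ) → (Fin d → ℝ) → (Fin d → ℝ)
  inv : (Fin d → ℝ) → (Fin d → ℝ)
  mul_assoc' : ∀ x y z, mul (mul x y) z = mul x (mul y z)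
  mul_zero' : ∀ x, mul x 0 = x
  zero_mul' : ∀ x, mul 0 x = x
  mul_inv' : ∀ x, mul x (inv x) = 0
  inv_mul' : ∀ x, mul (inv x) x = 0
  poly_mul : ∀ i, ∃ p : MvPolynomial (Fin d ⊕ Fin d) ℝ,
    ∀ x y, mul x y i = MvPolynomial.eval (Sum.elim x y) p
  poly_inv : ∀ i, ∃ p : MvPolynomial (Fin d) ℝ,
    ∀ x, inv x i = MvPolynomial.eval x p

/-- Euclidean norm on `ℝ^d`. -/
def eucNorm {d : ℕ} (x : Fin d → ℝ) : ℝ := Real.sqrt (∑ i, x i ^ 2)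

/-- A straight approximate group dilation structure for `G`, with the limit law `bullet`
and limit inverse `bulletInv`. -/
structure ApproxDil (d : ℕ) (G : PolyGroup d) where
  a : Fin d → ℝ
  a_pos : ∀ i, 0 < a i
  bulletInv : (Fin d → ℝ) → (Fin d → ℝ)
  bullet : (Fin d → ℝ) → (Fin d → ℝ) → (Fin d → ℝ)
  tendsto_inv : ∀ x,
    Tendsto (fun t : ℝ => dil a t⁻¹ (G.inv (dil a t x))) atTop (𝓝 (bulletInv x))
  tendsto_mul : ∀ x y,
    Tendsto (fun t : ℝ => dil a t⁻¹ (G.mul (dil a t x) (dil a t y))) atTop (𝓝 (bullet x y))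

/-!
Write `Φ_t(x, y) = δ_{1/t}(δ_t(x)⁻¹ · δ_t y)`. As `δ_t` scales coordinates by powers of `t`,
each coordinate of `Φ_t(x, y)` is a finite sum `∑_g q_g(x, y) t^g` with real exponents `g` and
polynomial coefficients `q_g`. Since `Φ_t(x, y)` converges as `t → ∞`, only exponents `g ≤ 0`
occur, so for `t ≥ 1` the maps `Φ_t` are uniformly Lipschitz on compact sets; as they vanish on
the diagonal, `|Φ_t(x, y)| ≲ |y - x|`. The same expansion of `δ_{1/t}(δ_t u · δ_t v)` shows that
`∙` is polynomial, with `x ∙ 0 = x` and `x ∙ (x∙⁻¹ ∙ y) = y`, whence `|y - x| ≲ |x∙⁻¹ ∙ y|`.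
Finally, for `w` in a bounded set, a sup-norm bound `|v| ≤ A |w|` gives `‖v‖ ≲ ‖w‖^{β₋/β₊}`
for any `‖·‖` comparable to `max_i |u_i|^{β_i/β}`.
-/

open scoped NNReal

lemma rpow_le_max_one_rpow_mul_rpow {r R α α' : ℝ} (hr : 0 ≤ r) (hrR : r ≤ R) (hα' : 0 < α')
    (hα'α : α' ≤ α) : r ^ α ≤ max 1 R ^ α * r ^ α' := by
  rcases hr.eq_or_lt with rfl | hr
  · simp [Real.zero_rpow (hα'.trans_le hα'α).ne', Real.zero_rpow hα'.ne']
  calc r ^ α = r ^ (α - α') * r ^ α' := by rw [← Real.rpow_add hr, sub_add_cancel]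
    _ ≤ max 1 R ^ (α - α') * r ^ α' := by
        gcongr
        exact hrR.trans (le_max_right 1 R)
    _ ≤ max 1 R ^ α * r ^ α' := by
        gcongr
        · exact le_max_left 1 R
        · linarith

def anisotropicNorm {ι : Type*} (e : ι → ℝ) (u : ι → ℝ) : ℝ := ⨆ i, |u i| ^ e i

section AnisotropicNorm

variable {ι : Type*} {e : ι → ℝ} {em ep : ℝ}

lemma anisotropicNorm_nonneg (u : ι → ℝ) : 0 ≤ anisotropicNorm e u :=
  Real.iSup_nonneg fun i => by positivity

lemma anisotropicNorm_le_of_norm_le_mul [Fintype ι] (hem : 0 < em) (he : ∀ i, em ≤ e i ∧ e i ≤ ep)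
    {A R : ℝ} {v w : ι → ℝ} (hvw : ‖v‖ ≤ A * ‖w‖) (hwR : ‖w‖ ≤ R) :
    anisotropicNorm e v ≤ (max 1 A * max 1 R) ^ ep * ‖w‖ ^ em := by
  refine Real.iSup_le (fun i => ?_) (by positivity)
  have hei : 0 ≤ e i := hem.le.trans (he i).1
  have hvi : |v i| ≤ max 1 A * ‖w‖ := by
    calc |v i| = ‖v i‖ := (Real.norm_eq_abs _).symm
      _ ≤ ‖v‖ := norm_le_pi_norm v i
      _ ≤ A * ‖w‖ := hvw
      _ ≤ max 1 A * ‖w‖ := by gcongr; exact le_max_right 1 A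
  calc |v i| ^ e i ≤ (max 1 A * ‖w‖) ^ e i := by gcongr
    _ = max 1 A ^ e i * ‖w‖ ^ e i := Real.mul_rpow (by positivity) (norm_nonneg w)
    _ ≤ max 1 A ^ ep * (max 1 R ^ e i * ‖w‖ ^ em) := by
        gcongr
        · exact le_max_left 1 A
        · exact (he i).2
        · exact rpow_le_max_one_rpow_mul_rpow (norm_nonneg w) hwR hem (he i).1
    _ ≤ max 1 A ^ ep * (max 1 R ^ ep * ‖w‖ ^ em) := by
        gcongr
        · exact le_max_left 1 R
        · exact (he i).2
    _ = (max 1 A * max 1 R) ^ ep * ‖w‖ ^ em := by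
        rw [Real.mul_rpow (by positivity) (by positivity)]; ring

lemma norm_rpow_le_anisotropicNorm [Fintype ι] [Nonempty ι] (he : ∀ i, 0 < e i ∧ e i ≤ ep) {R : ℝ}
    {w : ι → ℝ} (hwR : ‖w‖ ≤ R) : ‖w‖ ^ ep ≤ max 1 R ^ ep * anisotropicNorm e w := by
  obtain ⟨j, hj⟩ := Finite.exists_max fun j : ι => |w j|
  have hwj : ‖w‖ = |w j| := le_antisymm
    ((pi_norm_le_iff_of_nonneg (abs_nonneg _)).2 fun i => (Real.norm_eq_abs _).trans_le (hj i))
    ((Real.norm_eq_abs _).symm.trans_le (norm_le_pi_norm w j))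
  calc ‖w‖ ^ ep ≤ max 1 R ^ ep * |w j| ^ e j := by
        rw [hwj] at hwR ⊢
        exact rpow_le_max_one_rpow_mul_rpow (abs_nonneg _) hwR (he j).1 (he j).2
    _ ≤ max 1 R ^ ep * anisotropicNorm e w := by
        gcongr
        exact le_ciSup (f := fun i => |w i| ^ e i) (Set.finite_range _).bddAbove j

lemma exists_le_mul_rpow_of_norm_le_mul [Fintype ι] [Nonempty ι] (hem : 0 < em)
    (he : ∀ i, em ≤ e i ∧ e i ≤ ep) {N : (ι → ℝ) → ℝ} {c C : ℝ} (hc : 0 < c) (hC : 0 ≤ C)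
    (hN : ∀ u, c * anisotropicNorm e u ≤ N u ∧ N u ≤ C * anisotropicNorm e u) (A R : ℝ) :
    ∃ CK : ℝ, ∀ v w : ι → ℝ, ‖v‖ ≤ A * ‖w‖ → ‖w‖ ≤ R → N v ≤ CK * N w ^ (em / ep) := by
  obtain ⟨i⟩ := ‹Nonempty ι›
  have hep : 0 < ep := hem.trans_le ((he i).1.trans (he i).2)
  refine ⟨C * (max 1 A * max 1 R) ^ ep * (max 1 R ^ ep / c) ^ (em / ep),
    fun v w hvw hwR => ?_⟩
  have hρw : anisotropicNorm e w ≤ N w / c := by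
    rw [le_div_iff₀ hc, mul_comm]; exact (hN w).1
  have hNw : 0 ≤ N w := (mul_nonneg hc.le (anisotropicNorm_nonneg w)).trans (hN w).1
  calc N v ≤ C * anisotropicNorm e v := (hN v).2
    _ ≤ C * ((max 1 A * max 1 R) ^ ep * (‖w‖ ^ ep) ^ (em / ep)) := by
        rw [← Real.rpow_mul (norm_nonneg w), mul_div_cancel₀ _ hep.ne']
        gcongr
        exact anisotropicNorm_le_of_norm_le_mul hem he hvw hwR
    _ ≤ C * ((max 1 A * max 1 R) ^ ep * (max 1 R ^ ep / c * N w) ^ (em / ep)) := by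
        gcongr
        calc ‖w‖ ^ ep ≤ max 1 R ^ ep * anisotropicNorm e w :=
              norm_rpow_le_anisotropicNorm (fun i => ⟨hem.trans_le (he i).1, (he i).2⟩) hwR
          _ ≤ max 1 R ^ ep * (N w / c) := by gcongr
          _ = max 1 R ^ ep / c * N w := by ring
    _ = C * (max 1 A * max 1 R) ^ ep * (max 1 R ^ ep / c) ^ (em / ep) * N w ^ (em / ep) := by
        rw [Real.mul_rpow (by positivity) hNw]; ring

end AnisotropicNorm

open MvPolynomial

theorem MvPolynomial.contDiff_eval {σ : Type*} [Fintype σ] (p : MvPolynomial σ ℝ)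
    {n : WithTop ℕ∞} : ContDiff ℝ n fun z : σ → ℝ => eval z p := by
  induction p using MvPolynomial.induction_on with
  | C a => simpa using contDiff_const
  | add p q hp hq => simpa using hp.add hq
  | mul_X p v hp => simpa using hp.mul (contDiff_apply ℝ ℝ v)

def IsPolyMap {σ ι : Type*} (F : (σ → ℝ) → ι → ℝ) : Prop :=
  ∀ i, ∃ p : MvPolynomial σ ℝ, ∀ z, F z i = eval z p

namespace IsPolyMap

variable {σ ι : Type*} {F : (σ → ℝ) → ι → ℝ}

lemma comp {τ : Type*} {H : (τ → ℝ) → σ → ℝ} (hF : IsPolyMap F) (hH : IsPolyMap H) :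
    IsPolyMap (F ∘ H) := by
  choose h hh using hH
  intro i
  obtain ⟨p, hp⟩ := hF i
  refine ⟨bind₁ h p, fun z => ?_⟩
  rw [Function.comp_apply, hp, funext fun j => hh j z]
  exact (eval₂Hom_bind₁ (RingHom.id ℝ) z h p).symm

lemma contDiff [Fintype σ] [Fintype ι] (hF : IsPolyMap F) {n : WithTop ℕ∞} : ContDiff ℝ n F := by
  refine contDiff_pi.2 fun i => ?_
  obtain ⟨p, hp⟩ := hF i
  simpa only [hp] using p.contDiff_eval

lemma exists_lipschitzOnWith [Fintype σ] [Fintype ι] (hF : IsPolyMap F) {S : Set (σ → ℝ)}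
    (hS : IsCompact S) : ∃ K, LipschitzOnWith K F S :=
  (hF.contDiff (n := 1)).locallyLipschitz.locallyLipschitzOn.exists_lipschitzOnWith_of_compact hS

end IsPolyMap

lemma tendsto_rpow_atTop_of_neg {g : ℝ} (hg : g < 0) :
    Tendsto (fun t : ℝ => t ^ g) atTop (𝓝 0) := by
  simpa using tendsto_rpow_neg_atTop (neg_pos.2 hg)

lemma tendsto_mul_rpow_of_nonpos {c : ℝ → ℝ} {c₀ g : ℝ} (hg : g ≤ 0)
    (hc : Tendsto c atTop (𝓝 c₀)) :
    Tendsto (fun t => c t * t ^ g) atTop (𝓝 (if g = 0 then c₀ else 0)) := by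
  split_ifs with h
  · simpa [h] using hc
  · simpa using hc.mul (tendsto_rpow_atTop_of_neg (lt_of_le_of_ne hg h))

lemma coeff_eq_zero_of_tendsto_sum_rpow (s : Finset ℝ) {c : ℝ → ℝ} {ℓ : ℝ}
    (h : Tendsto (fun t => ∑ g ∈ s, c g * t ^ g) atTop (𝓝 ℓ)) {g : ℝ} (hg : g ∈ s)
    (hg0 : 0 < g) : c g = 0 := by
  induction s using Finset.induction_on_max generalizing ℓ with
  | empty => simp at hg
  | insert a s hlt ih =>
    have has : a ∉ s := fun h => (hlt a h).false
    have ha0 : 0 < a := by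
      rcases Finset.mem_insert.1 hg with rfl | hg
      exacts [hg0, hg0.trans (hlt g hg)]
    simp only [Finset.sum_insert has] at h
    -- dividing by `t ^ a` isolates the leading coefficient
    have hlead : Tendsto (fun t => c a + ∑ g ∈ s, c g * t ^ (g - a)) atTop (𝓝 (c a)) := by
      simpa using tendsto_const_nhds.add (tendsto_finsetSum s fun g hg =>
        (tendsto_const_nhds (x := c g)).mul (tendsto_rpow_atTop_of_neg (sub_neg.2 (hlt g hg))))
    have hzero : Tendsto (fun t => c a + ∑ g ∈ s, c g * t ^ (g - a)) atTop (𝓝 0) := by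
      have := h.mul (tendsto_rpow_neg_atTop ha0)
      rw [mul_zero] at this
      refine this.congr' ?_
      filter_upwards [eventually_gt_atTop 0] with t ht
      rw [add_mul, Finset.sum_mul, mul_assoc, ← Real.rpow_add ht, add_neg_cancel,
        Real.rpow_zero, mul_one]
      congr 1
      refine Finset.sum_congr rfl fun g _ => ?_
      rw [mul_assoc, ← Real.rpow_add ht, sub_eq_add_neg]
    have hca : c a = 0 := tendsto_nhds_unique hlead hzero
    rcases Finset.mem_insert.1 hg with rfl | hg
    · exact hca
    · exact ih (by simpa [hca] using h) hg

section ScaledPolynomial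

variable {σ : Type*}

lemma eval_scaled_monomial {t : ℝ} (ht : 0 < t) (w : σ → ℝ) (z : σ → ℝ) (m : σ →₀ ℕ) (a : ℝ) :
    eval (fun v => t ^ w v * z v) (monomial m a) =
      eval z (monomial m a) * t ^ Finsupp.weight w m := by
  simp only [eval_monomial, Finsupp.weight_apply, Finsupp.sum, Finsupp.prod,
    Real.rpow_sum_of_pos ht, mul_pow, Finset.prod_mul_distrib, nsmul_eq_mul]
  rw [Finset.prod_congr rfl fun v _ => (by rw [← Real.rpow_mul_natCast ht.le, mul_comm] :
    (t ^ w v) ^ m v = t ^ ((m v : ℝ) * w v))]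
  ring

lemma exists_rpow_mul_eval_scaled_eq_sum (p : MvPolynomial σ ℝ) (w : σ → ℝ) (e : ℝ) :
    ∃ (s : Finset ℝ) (q : ℝ → MvPolynomial σ ℝ), ∀ t, 0 < t → ∀ z,
      t ^ (-e) * eval (fun v => t ^ w v * z v) p = ∑ g ∈ s, eval z (q g) * t ^ g := by
  set γ : (σ →₀ ℕ) → ℝ := fun m => Finsupp.weight w m - e
  refine ⟨p.support.image γ, fun g => ∑ m ∈ p.support with γ m = g, monomial m (coeff m p),
    fun t ht z => ?_⟩
  calc t ^ (-e) * eval (fun v => t ^ w v * z v) p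
      = ∑ m ∈ p.support, eval z (monomial m (coeff m p)) * t ^ γ m := by
        conv_lhs => rw [p.as_sum]
        rw [map_sum, Finset.mul_sum]
        refine Finset.sum_congr rfl fun m _ => ?_
        rw [eval_scaled_monomial ht, Real.rpow_sub ht, Real.rpow_neg ht.le]
        field_simp
    _ = ∑ g ∈ p.support.image γ, ∑ m ∈ p.support with γ m = g,
          eval z (monomial m (coeff m p)) * t ^ g := by
        rw [← Finset.sum_fiberwise_of_maps_to fun m hm => Finset.mem_image_of_mem γ hm]
        refine Finset.sum_congr rfl fun g _ => Finset.sum_congr rfl fun m hm => ?_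
        rw [(Finset.mem_filter.1 hm).2]
    _ = _ := by simp only [map_sum, Finset.sum_mul]

end ScaledPolynomial

def HasNonposPowerExpansion {σ ι : Type*} (F : ℝ → (σ → ℝ) → ι → ℝ) : Prop :=
  ∀ i, ∃ (s : Finset ℝ) (q : ℝ → MvPolynomial σ ℝ), (∀ g ∈ s, g ≤ 0) ∧
    ∀ t, 0 < t → ∀ z, F t z i = ∑ g ∈ s, eval z (q g) * t ^ g

namespace HasNonposPowerExpansion

variable {σ ι : Type*} {F : ℝ → (σ → ℝ) → ι → ℝ}

lemma of_tendsto {P : (σ → ℝ) → ι → ℝ} (hP : IsPolyMap P) (w : σ → ℝ) (a : ι → ℝ)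
    (hF : ∀ t, 0 < t → ∀ z i, F t z i = t ^ (-a i) * P (fun v => t ^ w v * z v) i)
    (hconv : ∀ z, ∃ ℓ, Tendsto (fun t => F t z) atTop (𝓝 ℓ)) : HasNonposPowerExpansion F := by
  intro i
  obtain ⟨p, hp⟩ := hP i
  obtain ⟨s, q, hsq⟩ := exists_rpow_mul_eval_scaled_eq_sum p w (a i)
  have hexp : ∀ t, 0 < t → ∀ z, F t z i = ∑ g ∈ s, eval z (q g) * t ^ g := fun t ht z => by
    rw [hF t ht, hp, hsq t ht]
  have hpos : ∀ g ∈ s, 0 < g → ∀ z, eval z (q g) = 0 := fun g hg hg0 z => by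
    obtain ⟨ℓ, hℓ⟩ := hconv z
    refine coeff_eq_zero_of_tendsto_sum_rpow (c := fun g => eval z (q g)) s
      ((tendsto_pi_nhds.1 hℓ i).congr' ?_) hg hg0
    filter_upwards [eventually_gt_atTop 0] with t ht using hexp t ht z
  refine ⟨{g ∈ s | g ≤ 0}, q, fun g hg => (Finset.mem_filter.1 hg).2, fun t ht z => ?_⟩
  rw [hexp t ht z, Finset.sum_filter]
  refine Finset.sum_congr rfl fun g hg => ?_
  split_ifs with h
  · rfl
  · rw [hpos g hg (not_le.1 h) z, zero_mul]

lemma exists_tendsto (hF : HasNonposPowerExpansion F) :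
    ∃ P, IsPolyMap P ∧ ∀ {ζ : ℝ → σ → ℝ} {z : σ → ℝ}, Tendsto ζ atTop (𝓝 z) →
      Tendsto (fun t => F t (ζ t)) atTop (𝓝 (P z)) := by
  choose s q hs hsq using hF
  refine ⟨fun z i => eval z (if (0 : ℝ) ∈ s i then q i 0 else 0), fun i => ⟨_, fun z => rfl⟩,
    fun {ζ z} hζ => tendsto_pi_nhds.2 fun i => ?_⟩
  have hsum := tendsto_finsetSum (s i) fun g hg =>
    tendsto_mul_rpow_of_nonpos (hs i g hg) (((q i g).continuous_eval.tendsto z).comp hζ)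
  rw [Finset.sum_ite_eq'] at hsum
  refine (by simpa [apply_ite] using hsum : Tendsto _ _ _).congr' ?_
  filter_upwards [eventually_gt_atTop 0] with t ht using (hsq i t ht (ζ t)).symm

lemma isPolyMap_of_tendsto (hF : HasNonposPowerExpansion F) {L : (σ → ℝ) → ι → ℝ}
    (hL : ∀ z, Tendsto (fun t => F t z) atTop (𝓝 (L z))) : IsPolyMap L := by
  obtain ⟨P, hP, hPt⟩ := hF.exists_tendsto
  rwa [show L = P from funext fun z => tendsto_nhds_unique (hL z) (hPt tendsto_const_nhds)]

lemma tendsto_of_tendsto (hF : HasNonposPowerExpansion F) {L : (σ → ℝ) → ι → ℝ}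
    (hL : ∀ z, Tendsto (fun t => F t z) atTop (𝓝 (L z))) {ζ : ℝ → σ → ℝ} {z : σ → ℝ}
    (hζ : Tendsto ζ atTop (𝓝 z)) : Tendsto (fun t => F t (ζ t)) atTop (𝓝 (L z)) := by
  obtain ⟨P, hP, hPt⟩ := hF.exists_tendsto
  rw [tendsto_nhds_unique (hL z) (hPt tendsto_const_nhds)]
  exact hPt hζ

lemma exists_lipschitzOnWith [Fintype σ] [Fintype ι] (hF : HasNonposPowerExpansion F)
    {S : Set (σ → ℝ)} (hS : IsCompact S) :
    ∃ K, ∀ t, 1 ≤ t → LipschitzOnWith K (F t) S := by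
  have hcoord : ∀ i, ∃ K : ℝ≥0, ∀ t, 1 ≤ t → ∀ z ∈ S, ∀ z' ∈ S,
      dist (F t z i) (F t z' i) ≤ K * dist z z' := by
    intro i
    obtain ⟨s, q, hs, hsq⟩ := hF i
    choose K hK using fun g =>
      (q g).contDiff_eval.locallyLipschitz.locallyLipschitzOn.exists_lipschitzOnWith_of_compact hS
    refine ⟨∑ g ∈ s, K g, fun t ht z hz z' hz' => ?_⟩
    rw [hsq t (by linarith) z, hsq t (by linarith) z', dist_eq_norm, ← Finset.sum_sub_distrib,
      NNReal.coe_sum, Finset.sum_mul]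
    refine (norm_sum_le _ _).trans (Finset.sum_le_sum fun g hg => ?_)
    rw [← sub_mul, norm_mul, ← dist_eq_norm]
    calc dist (eval z (q g)) (eval z' (q g)) * ‖t ^ g‖
        ≤ K g * dist z z' * 1 := by
          gcongr
          · exact (hK g).dist_le_mul z hz z' hz'
          · rw [Real.norm_of_nonneg (by positivity)]
            exact Real.rpow_le_one_of_one_le_of_nonpos ht (hs g hg)
      _ = K g * dist z z' := mul_one _
  choose K hK using hcoord
  obtain ⟨M, hM⟩ := Finite.exists_le K
  refine ⟨M, fun t ht => LipschitzOnWith.of_dist_le_mul fun z hz z' hz' =>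
    (dist_pi_le_iff (by positivity)).2 fun i => (hK i t ht z hz z' hz').trans ?_⟩
  gcongr
  exact hM i

end HasNonposPowerExpansion

section SumElim

variable {α β : Type*}

lemma isCompact_image_sumElim {K : Set (α → ℝ)} {L : Set (β → ℝ)} (hK : IsCompact K)
    (hL : IsCompact L) : IsCompact ((fun p : (α → ℝ) × (β → ℝ) => Sum.elim p.1 p.2) '' K ×ˢ L) :=
  (hK.prod hL).image <| continuous_pi fun
    | .inl j => (continuous_apply j).comp continuous_fst
    | .inr j => (continuous_apply j).comp continuous_snd

lemma tendsto_sumElim {l : Filter ℝ} {u : ℝ → α → ℝ} {v : ℝ → β → ℝ} {u₀ : α → ℝ} {v₀ : β → ℝ}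
    (hu : Tendsto u l (𝓝 u₀)) (hv : Tendsto v l (𝓝 v₀)) :
    Tendsto (fun t => Sum.elim (u t) (v t)) l (𝓝 (Sum.elim u₀ v₀)) :=
  tendsto_pi_nhds.2 fun
    | .inl j => tendsto_pi_nhds.1 hu j
    | .inr j => tendsto_pi_nhds.1 hv j

lemma dist_sumElim_left [Fintype α] [Fintype β] (x : α → ℝ) (y y' : β → ℝ) :
    dist (Sum.elim x y) (Sum.elim x y') = dist y y' :=
  le_antisymm
    ((dist_pi_le_iff dist_nonneg).2 fun
      | .inl j => by simp
      | .inr j => dist_le_pi_dist y y' j)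
    ((dist_pi_le_iff dist_nonneg).2 fun j =>
      dist_le_pi_dist (Sum.elim x y) (Sum.elim x y') (.inr j))

end SumElim

section Dilation

variable {d : ℕ} {a : Fin d → ℝ} {t : ℝ}

lemma dil_inv_apply (ht : 0 < t) (u : Fin d → ℝ) (i : Fin d) :
    dil a t⁻¹ u i = t ^ (-a i) * u i := by
  rw [dil, Real.inv_rpow ht.le, Real.rpow_neg ht.le]

lemma dil_inv_dil (ht : 0 < t) (u : Fin d → ℝ) : dil a t⁻¹ (dil a t u) = u := by
  funext i
  rw [dil_inv_apply ht, dil, ← mul_assoc, ← Real.rpow_add ht, neg_add_cancel, Real.rpow_zero,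
    one_mul]

lemma dil_dil_inv (ht : 0 < t) (u : Fin d → ℝ) : dil a t (dil a t⁻¹ u) = u := by
  funext i
  rw [dil, dil_inv_apply ht, ← mul_assoc, ← Real.rpow_add ht, add_neg_cancel, Real.rpow_zero,
    one_mul]

lemma dil_zero : dil a t 0 = 0 := by
  funext i
  simp [dil]

end Dilation

namespace PolyGroup

variable {d : ℕ} (G : PolyGroup d)

lemma isPolyMap_mul : IsPolyMap fun z : Fin d ⊕ Fin d → ℝ => G.mul (z ∘ Sum.inl) (z ∘ Sum.inr) :=
  fun i => (G.poly_mul i).imp fun p hp z => by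
    simpa only [Sum.elim_comp_inl_inr] using hp (z ∘ Sum.inl) (z ∘ Sum.inr)

lemma isPolyMap_inv_mul :
    IsPolyMap fun z : Fin d ⊕ Fin d → ℝ => G.mul (G.inv (z ∘ Sum.inl)) (z ∘ Sum.inr) :=
  G.isPolyMap_mul.comp (H := fun z => Sum.elim (G.inv (z ∘ Sum.inl)) (z ∘ Sum.inr)) fun
    | .inl j => (G.poly_inv j).imp' (rename Sum.inl) fun p hp z => by rw [eval_rename]; exact hp _
    | .inr j => ⟨X (.inr j), fun z => (eval_X (f := z) _).symm⟩

end PolyGroup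

namespace ApproxDil

variable {d : ℕ} {G : PolyGroup d} (D : ApproxDil d G)

def scaledMul (t : ℝ) (u v : Fin d → ℝ) : Fin d → ℝ :=
  dil D.a t⁻¹ (G.mul (dil D.a t u) (dil D.a t v))

def scaledInvMul (t : ℝ) (x y : Fin d → ℝ) : Fin d → ℝ :=
  dil D.a t⁻¹ (G.mul (G.inv (dil D.a t x)) (dil D.a t y))

lemma hasNonposPowerExpansion_scaledMul :
    HasNonposPowerExpansion fun t (z : Fin d ⊕ Fin d → ℝ) =>
      D.scaledMul t (z ∘ Sum.inl) (z ∘ Sum.inr) :=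
  .of_tendsto G.isPolyMap_mul (Sum.elim D.a D.a) D.a (fun _ ht _ i => dil_inv_apply ht _ i)
    fun _ => ⟨_, D.tendsto_mul _ _⟩

lemma tendsto_scaledMul {u v : ℝ → Fin d → ℝ} {u₀ v₀ : Fin d → ℝ} (hu : Tendsto u atTop (𝓝 u₀))
    (hv : Tendsto v atTop (𝓝 v₀)) :
    Tendsto (fun t => D.scaledMul t (u t) (v t)) atTop (𝓝 (D.bullet u₀ v₀)) :=
  D.hasNonposPowerExpansion_scaledMul.tendsto_of_tendsto
    (L := fun z => D.bullet (z ∘ Sum.inl) (z ∘ Sum.inr)) (fun _ => D.tendsto_mul _ _)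
    (tendsto_sumElim hu hv)

lemma isPolyMap_bullet : IsPolyMap fun z : Fin d ⊕ Fin d → ℝ =>
    D.bullet (z ∘ Sum.inl) (z ∘ Sum.inr) :=
  D.hasNonposPowerExpansion_scaledMul.isPolyMap_of_tendsto fun _ => D.tendsto_mul _ _

lemma tendsto_scaledInvMul (x y : Fin d → ℝ) :
    Tendsto (fun t => D.scaledInvMul t x y) atTop (𝓝 (D.bullet (D.bulletInv x) y)) := by
  refine (D.tendsto_scaledMul (D.tendsto_inv x) tendsto_const_nhds).congr' ?_
  filter_upwards [eventually_gt_atTop 0] with t ht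
  rw [scaledMul, scaledInvMul, dil_dil_inv ht]

lemma hasNonposPowerExpansion_scaledInvMul :
    HasNonposPowerExpansion fun t (z : Fin d ⊕ Fin d → ℝ) =>
      D.scaledInvMul t (z ∘ Sum.inl) (z ∘ Sum.inr) :=
  .of_tendsto G.isPolyMap_inv_mul (Sum.elim D.a D.a) D.a (fun _ ht _ i => dil_inv_apply ht _ i)
    fun _ => ⟨_, D.tendsto_scaledInvMul _ _⟩

lemma isPolyMap_bullet_bulletInv : IsPolyMap fun z : Fin d ⊕ Fin d → ℝ =>
    D.bullet (D.bulletInv (z ∘ Sum.inl)) (z ∘ Sum.inr) :=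
  D.hasNonposPowerExpansion_scaledInvMul.isPolyMap_of_tendsto fun _ => D.tendsto_scaledInvMul _ _

lemma scaledInvMul_self (t : ℝ) (x : Fin d → ℝ) : D.scaledInvMul t x x = 0 := by
  rw [scaledInvMul, G.inv_mul', dil_zero]

lemma bullet_zero (x : Fin d → ℝ) : D.bullet x 0 = x := by
  refine tendsto_nhds_unique (D.tendsto_mul x 0) (tendsto_const_nhds.congr' ?_)
  filter_upwards [eventually_gt_atTop 0] with t ht
  rw [dil_zero, G.mul_zero', dil_inv_dil ht]

lemma bullet_bullet_bulletInv (x y : Fin d → ℝ) :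
    D.bullet x (D.bullet (D.bulletInv x) y) = y := by
  refine tendsto_nhds_unique (D.tendsto_scaledMul tendsto_const_nhds (D.tendsto_scaledInvMul x y))
    (tendsto_const_nhds.congr' ?_)
  filter_upwards [eventually_gt_atTop 0] with t ht
  rw [scaledMul, scaledInvMul, dil_dil_inv ht, ← G.mul_assoc', G.mul_inv', G.zero_mul',
    dil_inv_dil ht]

variable {K : Set (Fin d → ℝ)}

lemma exists_norm_scaledInvMul_le (hK : IsCompact K) :
    ∃ M : ℝ≥0, ∀ x ∈ K, ∀ y ∈ K, ∀ t, 1 ≤ t → ‖D.scaledInvMul t x y‖ ≤ M * ‖y - x‖ := by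
  obtain ⟨M, hM⟩ :=
    D.hasNonposPowerExpansion_scaledInvMul.exists_lipschitzOnWith (isCompact_image_sumElim hK hK)
  refine ⟨M, fun x hx y hy t ht => ?_⟩
  have hxy := (hM t ht).dist_le_mul (Sum.elim x y) ⟨(x, y), ⟨hx, hy⟩, rfl⟩
    (Sum.elim x x) ⟨(x, x), ⟨hx, hx⟩, rfl⟩
  rw [dist_sumElim_left] at hxy
  simpa [D.scaledInvMul_self, dist_eq_norm] using hxy

lemma exists_norm_sub_le_norm_bullet (hK : IsCompact K) :
    ∃ M : ℝ≥0, ∀ x ∈ K, ∀ y ∈ K, ‖y - x‖ ≤ M * ‖D.bullet (D.bulletInv x) y‖ := by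
  set Λ := fun z : Fin d ⊕ Fin d → ℝ => D.bullet (D.bulletInv (z ∘ Sum.inl)) (z ∘ Sum.inr)
  set S := (fun p : (Fin d → ℝ) × (Fin d → ℝ) => Sum.elim p.1 p.2) '' K ×ˢ K
  have hΛ : IsCompact (insert 0 (Λ '' S)) :=
    ((isCompact_image_sumElim hK hK).image
      (D.isPolyMap_bullet_bulletInv.contDiff (n := 0)).continuous).insert 0
  obtain ⟨M, hM⟩ := D.isPolyMap_bullet.exists_lipschitzOnWith (isCompact_image_sumElim hK hΛ)
  refine ⟨M, fun x hx y hy => ?_⟩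
  have hΛxy : D.bullet (D.bulletInv x) y ∈ insert 0 (Λ '' S) :=
    Set.mem_insert_of_mem _ ⟨Sum.elim x y, ⟨(x, y), ⟨hx, hy⟩, rfl⟩, rfl⟩
  have hxy := hM.dist_le_mul (Sum.elim x (D.bullet (D.bulletInv x) y)) ⟨(x, _), ⟨hx, hΛxy⟩, rfl⟩
    (Sum.elim x 0) ⟨(x, 0), ⟨hx, Set.mem_insert _ _⟩, rfl⟩
  rw [dist_sumElim_left] at hxy
  simpa [D.bullet_bullet_bulletInv, D.bullet_zero, dist_eq_norm] using hxy

lemma exists_norm_bullet_bulletInv_le (hK : IsCompact K) :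
    ∃ R, ∀ x ∈ K, ∀ y ∈ K, ‖D.bullet (D.bulletInv x) y‖ ≤ R := by
  obtain ⟨R, hR⟩ := isBounded_iff_forall_norm_le.1
    ((isCompact_image_sumElim hK hK).image
      (D.isPolyMap_bullet_bulletInv.contDiff (n := 0)).continuous).isBounded
  exact ⟨R, fun x hx y hy => hR _ ⟨Sum.elim x y, ⟨(x, y), ⟨hx, hy⟩, rfl⟩, rfl⟩⟩

end ApproxDil

theorem stmt_3_general (d : ℕ) (G : PolyGroup d) (β : Fin d → ℝ)
    (hβ : ∀ i, 0 < β i ∧ β i < 2)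
    (D : ApproxDil d G)
    (b : ℝ) (hble : ∀ i, β i ≤ b)
    (βm βp : ℝ) (hβm : IsLeast (Set.range β) βm) (hβp : IsGreatest (Set.range β) βp)
    (N : (Fin d → ℝ) → ℝ)
    (c C : ℝ) (hc : 0 < c) (hcC : c ≤ C)
    (hcomp : ∀ u, c * (⨆ i, |u i| ^ (β i / b)) ≤ N u ∧ N u ≤ C * (⨆ i, |u i| ^ (β i / b)))
    (K : Set (Fin d → ℝ)) (hK : IsCompact K) :
    ∃ CK : ℝ, ∀ x ∈ K, ∀ y ∈ K, ∀ t : ℝ, 1 ≤ t →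
      N (dil D.a t⁻¹ (G.mul (G.inv (dil D.a t x)) (dil D.a t y))) ≤
        CK * N (y - x) ^ (βm / βp) ∧
      N (dil D.a t⁻¹ (G.mul (G.inv (dil D.a t x)) (dil D.a t y))) ≤
        CK * N (D.bullet (D.bulletInv x) y) ^ (βm / βp) := by
  obtain ⟨i₀, hi₀⟩ := hβm.1
  have : Nonempty (Fin d) := ⟨i₀⟩
  have hb : 0 < b := (hβ i₀).1.trans_le (hble i₀)
  obtain ⟨M₁, hM₁⟩ := D.exists_norm_scaledInvMul_le hK
  obtain ⟨M₂, hM₂⟩ := D.exists_norm_sub_le_norm_bullet hK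
  obtain ⟨R₁, hR₁⟩ := Metric.isBounded_iff.1 hK.isBounded
  obtain ⟨R₂, hR₂⟩ := D.exists_norm_bullet_bulletInv_le hK
  obtain ⟨CK, hCK⟩ := exists_le_mul_rpow_of_norm_le_mul (e := fun i => β i / b)
    (div_pos (hi₀ ▸ (hβ i₀).1) hb)
    (fun i => ⟨div_le_div_of_nonneg_right (hβm.2 ⟨i, rfl⟩) hb.le,
      div_le_div_of_nonneg_right (hβp.2 ⟨i, rfl⟩) hb.le⟩)
    hc (hc.le.trans hcC) hcomp (M₁ * max 1 M₂) (max R₁ R₂)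
  rw [div_div_div_cancel_right₀ hb.ne'] at hCK
  refine ⟨CK, fun x hx y hy t ht => ⟨hCK _ _ ?_ ?_, hCK _ _ ?_ ?_⟩⟩
  · calc _ ≤ M₁ * ‖y - x‖ := hM₁ x hx y hy t ht
      _ ≤ M₁ * max 1 M₂ * ‖y - x‖ := by
          gcongr; exact le_mul_of_one_le_right M₁.2 (le_max_left _ _)
  · exact (dist_eq_norm y x ▸ hR₁ hy hx).trans (le_max_left _ _)
  · calc _ ≤ M₁ * ‖y - x‖ := hM₁ x hx y hy t ht
      _ ≤ M₁ * (max 1 M₂ * ‖D.bullet (D.bulletInv x) y‖) := by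
          gcongr; exact (hM₂ x hx y hy).trans (by gcongr; exact le_max_right _ _)
      _ = _ := (mul_assoc _ _ _).symm
  · exact (hR₂ x hx y hy).trans (le_max_right _ _)

theorem stmt_3 (d : ℕ) (G : PolyGroup d) (β : Fin d → ℝ)
    (hβ : ∀ i, 0 < β i ∧ β i < 2)
    (D : ApproxDil d G) (hDa : ∀ i, D.a i = (β i)⁻¹)
    (b : ℝ) (hble : ∀ i, β i ≤ b)
    (βm βp : ℝ) (hβm : IsLeast (Set.range β) βm) (hβp : IsGreatest (Set.range β) βp)
    (N : (Fin d → ℝ) → ℝ) (hNcont : Continuous N) (hNnn : ∀ u, 0 ≤ N u)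
    (hNscale : ∀ t : ℝ, 0 < t → ∀ u, N (dil D.a t u) = t ^ (1 / b) * N u)
    (c C : ℝ) (hc : 0 < c) (hcC : c ≤ C)
    (hcomp : ∀ u, c * (⨆ i, |u i| ^ (β i / b)) ≤ N u ∧ N u ≤ C * (⨆ i, |u i| ^ (β i / b)))
    (K : Set (Fin d → ℝ)) (hK : IsCompact K) :
    ∃ CK : ℝ, ∀ x ∈ K, ∀ y ∈ K, ∀ t : ℝ, 1 ≤ t →
      N (dil D.a t⁻¹ (G.mul (G.inv (dil D.a t x)) (dil D.a t y))) ≤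
        CK * N (y - x) ^ (βm / βp) ∧
      N (dil D.a t⁻¹ (G.mul (G.inv (dil D.a t x)) (dil D.a t y))) ≤
        CK * N (D.bullet (D.bulletInv x) y) ^ (βm / βp) :=
  stmt_3_general d G β hβ D b hble βm βp hβm hβp N c C hc hcC hcomp K hK
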